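/- Let α, β₁, β₂ ∈ (0,1). Consider the two two-piece environments e₁ = (α, β₁) and e₂ = (α, β₂). Then for every b ∈ {-1,1}, the conditional distribution of Y given B_c = b is the same under P_{α,β₁} and P_{α,β₂} (invariance of the invariant coordinate); and there exists b ∈ {-1,1} for which the conditional distribution of Y given B_s = b differs between P_{α,β₁} and P_{α,β₂} if and only if β₁ ≠ β₂ (variation sufficiency of the spurious coordinate). -/
import Mathlib


open MeasureTheory
open scoped ENNReal

/-- The Rademacher-type measure `Rad(γ)` on `ℤ`, putting mass `γ` on `-1` and `1-γ` on `1`. -/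
noncomputable def radMeas (γ : ℝ) : Measure ℤ :=
  ENNReal.ofReal γ • Measure.dirac (-1) + ENNReal.ofReal (1 - γ) • Measure.dirac 1

/-- The two-piece environment `P_{α,β}`: the joint law of `(Y, Y·R_c, Y·R_s)` where
`Y ~ Rad(1/2)` (uniform on `{-1,1}`), `R_c ~ Rad(α)`, `R_s ~ Rad(β)`, mutually independent. -/
noncomputable def twoPiece (α β : ℝ) : Measure (ℤ × ℤ × ℤ) :=
  Measure.map (fun t : ℤ × ℤ × ℤ => (t.1, t.1 * t.2.1, t.1 * t.2.2))
    ((radMeas (1 / 2)).prod ((radMeas α).prod (radMeas β)))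

lemma smul_prod'' {α β : Type*} [MeasurableSpace α] [MeasurableSpace β]
    (c : ℝ≥0∞) (μ : Measure α) (ν : Measure β) [SFinite μ] [SFinite ν] :
    (c • μ).prod ν = c • (μ.prod ν) := by
  ext s hs
  simp [Measure.prod_apply hs, MeasureTheory.lintegral_smul_measure]

lemma prod_smul'' {α β : Type*} [MeasurableSpace α] [MeasurableSpace β]
    (c : ℝ≥0∞) (μ : Measure α) (ν : Measure β) [SFinite μ] [SFinite ν] :
    μ.prod (c • ν) = c • (μ.prod ν) := by
  ext s hs
  rw [Measure.prod_apply hs, Measure.smul_apply, Measure.prod_apply hs]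
  simp only [Measure.smul_apply, smul_eq_mul]
  rw [lintegral_const_mul _ (measurable_measure_prodMk_left hs)]

lemma twoPiece_eq (α β : ℝ) : twoPiece α β =
    ENNReal.ofReal β •
        (ENNReal.ofReal α •
            (ENNReal.ofReal (1 / 2) • Measure.dirac (-1, 1, 1) +
              ENNReal.ofReal (1 / 2) • Measure.dirac (1, -1, -1)) +
          ENNReal.ofReal (1 - α) •
            (ENNReal.ofReal (1 / 2) • Measure.dirac (-1, -1, 1) +
              ENNReal.ofReal (1 / 2) • Measure.dirac (1, 1, -1))) +
      ENNReal.ofReal (1 - β) •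
        (ENNReal.ofReal α •
            (ENNReal.ofReal (1 / 2) • Measure.dirac (-1, 1, -1) +
              ENNReal.ofReal (1 / 2) • Measure.dirac (1, -1, 1)) +
          ENNReal.ofReal (1 - α) •
            (ENNReal.ofReal (1 / 2) • Measure.dirac (-1, -1, -1) +
              ENNReal.ofReal (1 / 2) • Measure.dirac (1, 1, 1))) := by
  have hm : Measurable (fun t : ℤ × ℤ × ℤ => (t.1, t.1 * t.2.1, t.1 * t.2.2)) :=
    measurable_of_countable _
  have h2 : (1 : ℝ) - 1 / 2 = 1 / 2 := by norm_num
  rw [twoPiece]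
  simp only [radMeas, Measure.prod_add, Measure.add_prod, smul_prod'', prod_smul'',
    Measure.dirac_prod_dirac, Measure.map_add _ _ hm, Measure.map_smul, Measure.map_dirac' hm,
    neg_mul, mul_neg, mul_one, one_mul, neg_neg, h2]

lemma fin1 (A A' B B' H : ℝ≥0∞) (hA : A + A' = 1) (hB : B + B' = 1) :
    B * (A * H) + B * (A' * H) + (B' * (A * H) + B' * (A' * H)) = H := by
  have h : B * (A * H) + B * (A' * H) + (B' * (A * H) + B' * (A' * H)) =
      (B + B') * ((A + A') * H) := by ring
  rw [h, hA, hB, one_mul, one_mul]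

lemma fin2 (A B B' H : ℝ≥0∞) (hB : B + B' = 1) :
    B * (A * H) + B' * (A * H) = H * A := by
  have h : B * (A * H) + B' * (A * H) = (B + B') * (A * H) := by ring
  rw [h, hB, one_mul, mul_comm]

lemma fin3 (A A' B H : ℝ≥0∞) (hA : A + A' = 1) :
    B * (A * H) + B * (A' * H) = H * B := by
  have h : B * (A * H) + B * (A' * H) = B * ((A + A') * H) := by ring
  rw [h, hA, one_mul, mul_comm]

lemma map_cond_eq_rad (μ : Measure (ℤ × ℤ × ℤ)) (s : Set (ℤ × ℤ × ℤ)) (hs : MeasurableSet s)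
    (γ : ℝ)
    (h0 : μ s = ENNReal.ofReal (1 / 2))
    (hneg : μ (s ∩ {t | t.1 = -1}) = ENNReal.ofReal (1 / 2) * ENNReal.ofReal γ)
    (hpos : μ (s ∩ {t | t.1 = 1}) = ENNReal.ofReal (1 / 2) * ENNReal.ofReal (1 - γ))
    (hother : ∀ a : ℤ, a ≠ -1 → a ≠ 1 → μ (s ∩ {t | t.1 = a}) = 0) :
    Measure.map (fun t : ℤ × ℤ × ℤ => t.1) (ProbabilityTheory.cond μ s) = radMeas γ := by
  have hH : (ENNReal.ofReal (1 / 2))⁻¹ * ENNReal.ofReal (1 / 2) = 1 :=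
    ENNReal.inv_mul_cancel (by simp) (by simp)
  apply MeasureTheory.Measure.ext_of_singleton
  intro a
  rw [Measure.map_apply (measurable_of_countable _) (measurableSet_singleton a),
    ProbabilityTheory.cond_apply hs, h0]
  have hpre : (fun t : ℤ × ℤ × ℤ => t.1) ⁻¹' {a} = {t | t.1 = a} := rfl
  rw [hpre]
  by_cases h1 : a = -1
  · subst h1
    rw [hneg, ← mul_assoc, hH, one_mul]
    simp [radMeas, Measure.dirac_apply]
  by_cases h2 : a = 1
  · subst h2
    rw [hpos, ← mul_assoc, hH, one_mul]
    simp [radMeas, Measure.dirac_apply]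
  · rw [hother a h1 h2, mul_zero]
    simp [radMeas, Measure.dirac_apply, Ne.symm h1, Ne.symm h2]

lemma cond_inv_eq (α β : ℝ) (hα : α ∈ Set.Ioo (0 : ℝ) 1) (hβ : β ∈ Set.Ioo (0 : ℝ) 1)
    (b : ℤ) (hb : b = -1 ∨ b = 1) :
    Measure.map (fun t : ℤ × ℤ × ℤ => t.1)
        (ProbabilityTheory.cond (twoPiece α β) {t : ℤ × ℤ × ℤ | t.2.1 = b}) =
      radMeas (if b = 1 then α else 1 - α) := by
  have hA : ENNReal.ofReal α + ENNReal.ofReal (1 - α) = 1 := by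
    rw [← ENNReal.ofReal_add hα.1.le (by linarith [hα.2])]; norm_num
  have hB : ENNReal.ofReal β + ENNReal.ofReal (1 - β) = 1 := by
    rw [← ENNReal.ofReal_add hβ.1.le (by linarith [hβ.2])]; norm_num
  rcases hb with hb | hb <;> subst hb
  · have hs : MeasurableSet {t : ℤ × ℤ × ℤ | t.2.1 = (-1 : ℤ)} :=
      (measurable_of_countable fun t : ℤ × ℤ × ℤ => t.2.1) (measurableSet_singleton (-1))
    rw [if_neg (by decide)]
    refine map_cond_eq_rad _ _ hs _ ?_ ?_ ?_ ?_
    · rw [twoPiece_eq]; simp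
      exact fin1 _ _ _ _ _ hA hB
    · rw [twoPiece_eq]; simp
      exact fin2 _ _ _ _ hB
    · rw [show (1 : ℝ) - (1 - α) = α by ring, twoPiece_eq]; simp
      exact fin2 _ _ _ _ hB
    · intro a h1 h2
      rw [twoPiece_eq]; simp [Ne.symm h1, Ne.symm h2]
  · have hs : MeasurableSet {t : ℤ × ℤ × ℤ | t.2.1 = (1 : ℤ)} :=
      (measurable_of_countable fun t : ℤ × ℤ × ℤ => t.2.1) (measurableSet_singleton 1)
    rw [if_pos rfl]
    refine map_cond_eq_rad _ _ hs _ ?_ ?_ ?_ ?_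
    · rw [twoPiece_eq]; simp
      exact fin1 _ _ _ _ _ hA hB
    · rw [twoPiece_eq]; simp
      exact fin2 _ _ _ _ hB
    · rw [twoPiece_eq]; simp
      exact fin2 _ _ _ _ hB
    · intro a h1 h2
      rw [twoPiece_eq]; simp [Ne.symm h1, Ne.symm h2]

lemma cond_spur_eq (α β : ℝ) (hα : α ∈ Set.Ioo (0 : ℝ) 1) (hβ : β ∈ Set.Ioo (0 : ℝ) 1)
    (b : ℤ) (hb : b = -1 ∨ b = 1) :
    Measure.map (fun t : ℤ × ℤ × ℤ => t.1)
        (ProbabilityTheory.cond (twoPiece α β) {t : ℤ × ℤ × ℤ | t.2.2 = b}) =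
      radMeas (if b = 1 then β else 1 - β) := by
  have hA : ENNReal.ofReal α + ENNReal.ofReal (1 - α) = 1 := by
    rw [← ENNReal.ofReal_add hα.1.le (by linarith [hα.2])]; norm_num
  have hB : ENNReal.ofReal β + ENNReal.ofReal (1 - β) = 1 := by
    rw [← ENNReal.ofReal_add hβ.1.le (by linarith [hβ.2])]; norm_num
  rcases hb with hb | hb <;> subst hb
  · have hs : MeasurableSet {t : ℤ × ℤ × ℤ | t.2.2 = (-1 : ℤ)} :=
      (measurable_of_countable fun t : ℤ × ℤ × ℤ => t.2.2) (measurableSet_singleton (-1))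
    rw [if_neg (by decide)]
    refine map_cond_eq_rad _ _ hs _ ?_ ?_ ?_ ?_
    · rw [twoPiece_eq]; simp
      exact fin1 _ _ _ _ _ hA hB
    · rw [twoPiece_eq]; simp
      exact fin3 _ _ _ _ hA
    · rw [show (1 : ℝ) - (1 - β) = β by ring, twoPiece_eq]; simp
      exact fin3 _ _ _ _ hA
    · intro a h1 h2
      rw [twoPiece_eq]; simp [Ne.symm h1, Ne.symm h2]
  · have hs : MeasurableSet {t : ℤ × ℤ × ℤ | t.2.2 = (1 : ℤ)} :=
      (measurable_of_countable fun t : ℤ × ℤ × ℤ => t.2.2) (measurableSet_singleton 1)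
    rw [if_pos rfl]
    refine map_cond_eq_rad _ _ hs _ ?_ ?_ ?_ ?_
    · rw [twoPiece_eq]; simp
      exact fin1 _ _ _ _ _ hA hB
    · rw [twoPiece_eq]; simp
      exact fin3 _ _ _ _ hA
    · rw [twoPiece_eq]; simp
      exact fin3 _ _ _ _ hA
    · intro a h1 h2
      rw [twoPiece_eq]; simp [Ne.symm h1, Ne.symm h2]

lemma radMeas_inj {β₁ β₂ : ℝ} (h1 : 0 ≤ β₁) (h2 : 0 ≤ β₂) (h : radMeas β₁ = radMeas β₂) :
    β₁ = β₂ := by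
  have e : ∀ β : ℝ, radMeas β {(-1 : ℤ)} = ENNReal.ofReal β := by
    intro β
    simp [radMeas, Measure.dirac_apply]
  have := congrArg (fun μ : Measure ℤ => μ {(-1 : ℤ)}) h
  simp only [e] at this
  rwa [ENNReal.ofReal_eq_ofReal_iff h1 h2] at this

/-- across the two environments `(α,β₁)` and `(α,β₂)`, the conditional law of
the label given the invariant coordinate is invariant; and the conditional law of the label
given the spurious coordinate differs for some value iff `β₁ ≠ β₂`. -/
theorem twoPiece_invariance_variation (α β₁ β₂ : ℝ) (hα : α ∈ Set.Ioo (0 : ℝ) 1)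
    (h1 : β₁ ∈ Set.Ioo (0 : ℝ) 1) (h2 : β₂ ∈ Set.Ioo (0 : ℝ) 1) :
    (∀ b : ℤ, b = -1 ∨ b = 1 →
      Measure.map (fun t : ℤ × ℤ × ℤ => t.1)
          (ProbabilityTheory.cond (twoPiece α β₁) {t : ℤ × ℤ × ℤ | t.2.1 = b}) =
        Measure.map (fun t : ℤ × ℤ × ℤ => t.1)
          (ProbabilityTheory.cond (twoPiece α β₂) {t : ℤ × ℤ × ℤ | t.2.1 = b})) ∧
    ((∃ b : ℤ, (b = -1 ∨ b = 1) ∧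
      Measure.map (fun t : ℤ × ℤ × ℤ => t.1)
          (ProbabilityTheory.cond (twoPiece α β₁) {t : ℤ × ℤ × ℤ | t.2.2 = b}) ≠
        Measure.map (fun t : ℤ × ℤ × ℤ => t.1)
          (ProbabilityTheory.cond (twoPiece α β₂) {t : ℤ × ℤ × ℤ | t.2.2 = b})) ↔
      β₁ ≠ β₂) := by
  constructor
  · intro b hb
    rw [cond_inv_eq α β₁ hα h1 b hb, cond_inv_eq α β₂ hα h2 b hb]
  · constructor
    · rintro ⟨b, hb, hne⟩ heq
      subst heq
      exact hne rfl
    · intro hne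
      refine ⟨1, Or.inr rfl, ?_⟩
      rw [cond_spur_eq α β₁ hα h1 1 (Or.inr rfl), cond_spur_eq α β₂ hα h2 1 (Or.inr rfl)]
      simp only [if_pos rfl]
      intro h
      exact hne (radMeas_inj h1.1.le h2.1.le h)
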